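/- Let I be a database, a an individual whose only feature-comparison-relevant structure within depth s involves f-values in a finite set W, and let C be an ALC(f) concept of depth at most s. Let C' be obtained from C by replacing each subconcept (f ≤ v) with v ∉ W by (f ≤ v') where v' is the largest element of W with v' ≤ v (and dually (f ≥ v) by (f ≥ v') with v' the smallest element of W with v' ≥ v), assuming such v' exist. Then a ∈ C^I iff a ∈ C'^I. -/
import Mathlib



/-- A database with feature facts. -/
structure DBf (CN RN FN Ind V : Type) where
  concFact : CN → Ind → Prop
  roleFact : RN → Ind → Ind → Prop
  featFact : FN → Ind → V → Prop
  adom : Set Ind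

def DBf.succ {CN RN FN Ind V : Type} (I : DBf CN RN FN Ind V) (r : RN) (a : Ind) :
    Set Ind := {b | I.roleFact r a b}

/-- ALC(f) concepts, with feature comparisons (f ≤ v) and (f ≥ v). -/
inductive ALCf (CN RN FN V : Type) : Type where
  | top : ALCf CN RN FN V
  | atom (A : CN) : ALCf CN RN FN V
  | neg (C : ALCf CN RN FN V) : ALCf CN RN FN V
  | inter (C D : ALCf CN RN FN V) : ALCf CN RN FN V
  | ex (r : RN) (C : ALCf CN RN FN V) : ALCf CN RN FN V
  | all (r : RN) (C : ALCf CN RN FN V) : ALCf CN RN FN V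
  | fle (f : FN) (v : V) : ALCf CN RN FN V
  | fge (f : FN) (v : V) : ALCf CN RN FN V

def ALCf.sem {CN RN FN Ind V : Type} [LinearOrder V] (I : DBf CN RN FN Ind V) :
    ALCf CN RN FN V → Set Ind
  | .top => I.adom
  | .atom A => {a ∈ I.adom | I.concFact A a}
  | .neg C => I.adom \ C.sem I
  | .inter C D => C.sem I ∩ D.sem I
  | .ex r C => {a ∈ I.adom | ∃ b ∈ I.succ r a, b ∈ C.sem I}
  | .all r C => {a ∈ I.adom | ∀ b ∈ I.succ r a, b ∈ C.sem I}
  | .fle f v => {a ∈ I.adom | ∃ v', I.featFact f a v' ∧ v' ≤ v}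
  | .fge f v => {a ∈ I.adom | ∃ v', I.featFact f a v' ∧ v ≤ v'}

def ALCf.size {CN RN FN V : Type} : ALCf CN RN FN V → ℕ
  | .top => 1
  | .atom _ => 1
  | .neg C => 1 + C.size
  | .inter C D => 1 + C.size + D.size
  | .ex _ C => 1 + C.size
  | .all _ C => 1 + C.size
  | .fle _ _ => 1
  | .fge _ _ => 1

/-- Role depth of a concept. -/
def ALCf.depth {CN RN FN V : Type} : ALCf CN RN FN V → ℕ
  | .top => 0
  | .atom _ => 0
  | .neg C => C.depth
  | .inter C D => max C.depth D.depth
  | .ex _ C => 1 + C.depth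
  | .all _ C => 1 + C.depth
  | .fle _ _ => 0
  | .fge _ _ => 0

/-- All feature values occurring in the concept lie in `V`. -/
def ALCf.valsIn {CN RN FN W : Type} (Vs : Finset W) : ALCf CN RN FN W → Prop
  | .top => True
  | .atom _ => True
  | .neg C => C.valsIn Vs
  | .inter C D => C.valsIn Vs ∧ D.valsIn Vs
  | .ex _ C => C.valsIn Vs
  | .all _ C => C.valsIn Vs
  | .fle _ v => v ∈ Vs
  | .fge _ v => v ∈ Vs

/-- The set of individuals reachable from `a` by at most `k` role edges. -/
def ReachN {CN RN FN Ind V : Type} (I : DBf CN RN FN Ind V) (a : Ind) : ℕ → Set Ind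
  | 0 => {a}
  | (k + 1) => ReachN I a k ∪ {b | ∃ c ∈ ReachN I a k, ∃ r, I.roleFact r c b}

/-- Feature-`f` values reachable within depth `s` from `a`. -/
def reachVal {CN RN FN Ind V : Type} (I : DBf CN RN FN Ind V) (a : Ind)
    (f : FN) (s : ℕ) : Set V :=
  {v | ∃ c ∈ ReachN I a s, I.featFact f c v}

/-- `(f ≤ v)` occurs in the concept. -/
def ALCf.usesLe {CN RN FN W : Type} : ALCf CN RN FN W → FN → W → Prop
  | .top, _, _ => False
  | .atom _, _, _ => False
  | .neg C, f, v => C.usesLe f v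
  | .inter C D, f, v => C.usesLe f v ∨ D.usesLe f v
  | .ex _ C, f, v => C.usesLe f v
  | .all _ C, f, v => C.usesLe f v
  | .fle f' v', f, v => f' = f ∧ v' = v
  | .fge _ _, _, _ => False

/-- `(f ≥ v)` occurs in the concept. -/
def ALCf.usesGe {CN RN FN W : Type} : ALCf CN RN FN W → FN → W → Prop
  | .top, _, _ => False
  | .atom _, _, _ => False
  | .neg C, f, v => C.usesGe f v
  | .inter C D, f, v => C.usesGe f v ∨ D.usesGe f v
  | .ex _ C, f, v => C.usesGe f v
  | .all _ C, f, v => C.usesGe f v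
  | .fle _ _, _, _ => False
  | .fge f' v', f, v => f' = f ∧ v' = v

/-- The largest element of `W'` that is `≤ v` (and `v` itself if none exists). -/
noncomputable def roundLe {W : Type} [LinearOrder W] (W' : Finset W) (v : W) : W :=
  if h : (W'.filter (· ≤ v)).Nonempty then (W'.filter (· ≤ v)).max' h else v

/-- The smallest element of `W'` that is `≥ v` (and `v` itself if none exists). -/
noncomputable def roundGe {W : Type} [LinearOrder W] (W' : Finset W) (v : W) : W :=
  if h : (W'.filter (v ≤ ·)).Nonempty then (W'.filter (v ≤ ·)).min' h else v

/-- Replace every feature value in the concept by its best approximation in `W'`. -/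
noncomputable def roundC {CN RN FN W : Type} [LinearOrder W] (W' : Finset W) :
    ALCf CN RN FN W → ALCf CN RN FN W
  | .top => .top
  | .atom A => .atom A
  | .neg C => .neg (roundC W' C)
  | .inter C D => .inter (roundC W' C) (roundC W' D)
  | .ex r C => .ex r (roundC W' C)
  | .all r C => .all r (roundC W' C)
  | .fle f v => .fle f (roundLe W' v)
  | .fge f v => .fge f (roundGe W' v)

lemma reach_self {CN RN FN Ind V : Type} (I : DBf CN RN FN Ind V) (a : Ind) :
    ∀ k, a ∈ ReachN I a k := by
  intro k; induction k with
  | zero => exact rfl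
  | succ k ih => exact Or.inl ih

lemma reach_mono {CN RN FN Ind V : Type} (I : DBf CN RN FN Ind V) (a : Ind) :
    ∀ {k k'}, k ≤ k' → ReachN I a k ⊆ ReachN I a k' := by
  intro k k' h
  induction k' with
  | zero => simp_all
  | succ n ih =>
    rcases Nat.lt_or_ge k (n+1) with h' | h'
    · exact fun x hx => Or.inl (ih (Nat.lt_succ_iff.mp h') hx)
    · have : k = n + 1 := le_antisymm h h'
      subst this; exact fun x hx => hx

lemma reach_step {CN RN FN Ind V : Type} (I : DBf CN RN FN Ind V) {a b : Ind}
    {r : RN} (hr : I.roleFact r a b) :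
    ∀ m, ReachN I b m ⊆ ReachN I a (m + 1) := by
  intro m
  induction m with
  | zero =>
    intro x hx
    have : x = b := hx
    subst this
    exact Or.inr ⟨a, reach_self I a 0, r, hr⟩
  | succ m ih =>
    intro x hx
    rcases hx with hx | ⟨c, hc, r', hr'⟩
    · exact reach_mono I a (Nat.le_succ _) (ih hx)
    · exact Or.inr ⟨c, ih hc, r', hr'⟩

lemma round_aux {CN RN FN Ind W : Type} [LinearOrder W]
    (I : DBf CN RN FN Ind W) (W' : Finset W) :
    ∀ (C : ALCf CN RN FN W) (k : ℕ), C.depth ≤ k →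
    (∀ (f : FN) (v : W), C.usesLe f v → (W'.filter (· ≤ v)).Nonempty) →
    (∀ (f : FN) (v : W), C.usesGe f v → (W'.filter (v ≤ ·)).Nonempty) →
    ∀ b : Ind,
    (∀ c ∈ ReachN I b k, ∀ (f : FN) (v : W), I.featFact f c v → v ∈ W') →
    (b ∈ C.sem I ↔ b ∈ (roundC W' C).sem I) := by
  intro C
  induction C with
  | top => intro _ _ _ _ _ _; rfl
  | atom A => intro _ _ _ _ _ _; rfl
  | neg C ih =>
    intro k hd hle hge b hreach
    have := ih k hd hle hge b hreach
    simp only [roundC, ALCf.sem, Set.mem_diff]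
    tauto
  | inter C D ihC ihD =>
    intro k hd hle hge b hreach
    have h1 := ihC k (le_trans (le_max_left _ _) hd)
      (fun f v h => hle f v (Or.inl h)) (fun f v h => hge f v (Or.inl h)) b hreach
    have h2 := ihD k (le_trans (le_max_right _ _) hd)
      (fun f v h => hle f v (Or.inr h)) (fun f v h => hge f v (Or.inr h)) b hreach
    simp only [roundC, ALCf.sem, Set.mem_inter_iff]
    tauto
  | ex r C ih =>
    intro k hd hle hge b hreach
    obtain ⟨k', rfl⟩ : ∃ k', k = k' + 1 := by
      rcases k with _ | k'
      · simp [ALCf.depth] at hd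
      · exact ⟨_, rfl⟩
    have hd' : C.depth ≤ k' := by
      simp [ALCf.depth] at hd; omega
    simp only [roundC, ALCf.sem, Set.mem_setOf_eq]
    constructor
    · rintro ⟨hb, c, hc, hsem⟩
      refine ⟨hb, c, hc, ?_⟩
      exact (ih k' hd' hle hge c
        (fun d hd'' f v hv => hreach d (reach_step I hc k' hd'') f v hv)).mp hsem
    · rintro ⟨hb, c, hc, hsem⟩
      refine ⟨hb, c, hc, ?_⟩
      exact (ih k' hd' hle hge c
        (fun d hd'' f v hv => hreach d (reach_step I hc k' hd'') f v hv)).mpr hsem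
  | all r C ih =>
    intro k hd hle hge b hreach
    obtain ⟨k', rfl⟩ : ∃ k', k = k' + 1 := by
      rcases k with _ | k'
      · simp [ALCf.depth] at hd
      · exact ⟨_, rfl⟩
    have hd' : C.depth ≤ k' := by
      simp [ALCf.depth] at hd; omega
    simp only [roundC, ALCf.sem, Set.mem_setOf_eq]
    constructor
    · rintro ⟨hb, h⟩
      refine ⟨hb, fun c hc => ?_⟩
      exact (ih k' hd' hle hge c
        (fun d hd'' f v hv => hreach d (reach_step I hc k' hd'') f v hv)).mp (h c hc)
    · rintro ⟨hb, h⟩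
      refine ⟨hb, fun c hc => ?_⟩
      exact (ih k' hd' hle hge c
        (fun d hd'' f v hv => hreach d (reach_step I hc k' hd'') f v hv)).mpr (h c hc)
  | fle f v =>
    intro k _ hle _ b hreach
    have hne : (W'.filter (· ≤ v)).Nonempty := hle f v ⟨rfl, rfl⟩
    have hrle : roundLe W' v ≤ v := by
      rw [roundLe, dif_pos hne]
      have := Finset.max'_mem _ hne
      exact (Finset.mem_filter.mp this).2
    simp only [roundC, ALCf.sem, Set.mem_setOf_eq]
    constructor
    · rintro ⟨hb, w, hw, hwv⟩
      refine ⟨hb, w, hw, ?_⟩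
      have hwW : w ∈ W' := hreach b (reach_self I b k) f w hw
      rw [roundLe, dif_pos hne]
      exact Finset.le_max' (W'.filter (· ≤ v)) w (Finset.mem_filter.mpr ⟨hwW, hwv⟩)
    · rintro ⟨hb, w, hw, hwv⟩
      exact ⟨hb, w, hw, le_trans hwv hrle⟩
  | fge f v =>
    intro k _ _ hge b hreach
    have hne : (W'.filter (v ≤ ·)).Nonempty := hge f v ⟨rfl, rfl⟩
    have hrge : v ≤ roundGe W' v := by
      rw [roundGe, dif_pos hne]
      have := Finset.min'_mem _ hne
      exact (Finset.mem_filter.mp this).2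
    simp only [roundC, ALCf.sem, Set.mem_setOf_eq]
    constructor
    · rintro ⟨hb, w, hw, hwv⟩
      refine ⟨hb, w, hw, ?_⟩
      have hwW : w ∈ W' := hreach b (reach_self I b k) f w hw
      rw [roundGe, dif_pos hne]
      exact Finset.min'_le (W'.filter (v ≤ ·)) w (Finset.mem_filter.mpr ⟨hwW, hwv⟩)
    · rintro ⟨hb, w, hw, hwv⟩
      exact ⟨hb, w, hw, le_trans hrge hwv⟩

/-- Rounding lemma: if every feature value within distance `s` of `a` lies in
`W'`, `C` has depth at most `s`, and the required approximations in `W'` exist,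
then `a` satisfies `C` iff `a` satisfies the rounded concept. -/
theorem stmt18 {CN RN FN Ind W : Type} [LinearOrder W]
    (I : DBf CN RN FN Ind W) (a : Ind) (s : ℕ) (W' : Finset W)
    (hreach : ∀ c ∈ ReachN I a s, ∀ (f : FN) (v : W), I.featFact f c v → v ∈ W')
    (C : ALCf CN RN FN W) (hdepth : C.depth ≤ s)
    (hle : ∀ (f : FN) (v : W), C.usesLe f v → (W'.filter (· ≤ v)).Nonempty)
    (hge : ∀ (f : FN) (v : W), C.usesGe f v → (W'.filter (v ≤ ·)).Nonempty) :
    a ∈ C.sem I ↔ a ∈ (roundC W' C).sem I := by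
  exact round_aux I W' C s hdepth hle hge a hreach
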